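/- arXiv:2509.10460 — 6 statements merged into one kernel-verified Lean document; each statement's English description precedes it below -/
import Mathlib

section
/- Let A_1, …, A_n (n > 2) be points on the unit sphere centered at the origin O in d-dimensional Euclidean space (d > 1), and let λ be a real number. Then for every index i, the P_λ point of the sub-polygon omitting A_i, namely P_{λ,i} = λ·(Σ_{j=1}^n a_j − a_i), lies on the hypersphere of radius |λ| centered at the P_λ point of the whole polygon, P_λ^n = λ·Σ_{j=1}^n a_j; that is, dist(P_{λ,i}, P_λ^n) = |λ| for all i. -/
open scoped BigOperators

/-- For points `A₁, …, Aₙ` (`n > 2`) on the unit sphere centered at the origin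
in `d`-dimensional Euclidean space (`d > 1`) and `λ ∈ ℝ`, the `P_λ` point of the sub-polygon
omitting `A_i`, namely `P_{λ,i} = λ • (∑ j, a j - a i)`, lies on the hypersphere of radius `|λ|`
centered at `P_λ^n = λ • ∑ j, a j`. -/
theorem stmt_0 (d n : ℕ) (hd : 1 < d) (hn : 2 < n) (lam : ℝ)
    (a : Fin n → EuclideanSpace ℝ (Fin d)) (ha : ∀ j, ‖a j‖ = 1) :
    ∀ i : Fin n, dist (lam • (∑ j, a j - a i)) (lam • ∑ j, a j) = |lam| := by
  intro i
  rw [dist_eq_norm, ← smul_sub, norm_smul, Real.norm_eq_abs]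
  have : (∑ j, a j - a i) - ∑ j, a j = -(a i) := by abel
  rw [this, norm_neg, ha i, mul_one]
end

section
/- Let A_1, …, A_n (n > 2) be points on the unit sphere centered at the origin O in d-dimensional Euclidean space (d > 1), and let λ be a real number. Then the P_λ point of the whole polygon, P_λ^n = λ·Σ_{j=1}^n a_j, lies on each hypersphere of radius |λ| centered at a sub-polygon point P_{λ,i} = λ·(Σ_{j=1}^n a_j − a_i); that is, dist(P_λ^n, P_{λ,i}) = |λ| for all i. -/
open scoped BigOperators

/-- For points `A₁, …, Aₙ` (`n > 2`) on the unit sphere centered at the origin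
in `d`-dimensional Euclidean space (`d > 1`) and `λ ∈ ℝ`, the `P_λ` point of the whole polygon,
`P_λ^n = λ • ∑ j, a j`, lies on each hypersphere of radius `|λ|` centered at a sub-polygon point
`P_{λ,i} = λ • (∑ j, a j - a i)`. -/
theorem stmt_1 (d n : ℕ) (hd : 1 < d) (hn : 2 < n) (lam : ℝ)
    (a : Fin n → EuclideanSpace ℝ (Fin d)) (ha : ∀ j, ‖a j‖ = 1) :
    ∀ i : Fin n, dist (lam • ∑ j, a j) (lam • (∑ j, a j - a i)) = |lam| := by
  intro i
  rw [dist_eq_norm, ← smul_sub]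
  have : (∑ j, a j) - (∑ j, a j - a i) = a i := by abel
  rw [this, norm_smul, ha i, Real.norm_eq_abs, mul_one]
end

section
/- Let A_1, …, A_n (n > 2) be points on the unit sphere centered at the origin in d-dimensional Euclidean space (d > 1), and let λ ∈ ℝ with λ ≠ −1. Set t = (λ/(λ+1))·Σ_{j=1}^n a_j. Then the homothety centered at t with ratio −λ maps each vertex A_i to the P_λ point of the sub-polygon omitting A_i; that is, −λ·(a_i − t) + t = λ·(Σ_{j=1}^n a_j − a_i) for every index i. -/
open scoped BigOperators

/-- With `t = (λ/(λ+1)) • ∑ j, a j`, the homothety centered at `t` with ratio `-λ`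
maps each vertex `A_i` to the `P_λ` point of the sub-polygon omitting `A_i`:
`-λ • (a i - t) + t = λ • (∑ j, a j - a i)`. -/
theorem stmt_2 (d n : ℕ) (hd : 1 < d) (hn : 2 < n) (lam : ℝ) (hlam : lam ≠ -1)
    (a : Fin n → EuclideanSpace ℝ (Fin d)) (ha : ∀ j, ‖a j‖ = 1)
    (t : EuclideanSpace ℝ (Fin d)) (ht : t = (lam / (lam + 1)) • ∑ j, a j) :
    ∀ i : Fin n, (-lam) • (a i - t) + t = lam • (∑ j, a j - a i) := by
  have h1 : lam + 1 ≠ 0 := by intro h; apply hlam; linarith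
  subst ht
  intro i
  match_scalars <;> field_simp <;> ring
end

section
/- Let A_1, …, A_n (n > 2) be points on the unit sphere centered at the origin in d-dimensional Euclidean space (d > 1), and let λ ∈ ℝ with λ ≠ −1. Set t = (λ/(λ+1))·Σ_{j=1}^n a_j. Then for every index i, the point t lies on the line through A_i and the point P_{λ,i} = λ·(Σ_{j=1}^n a_j − a_i) (i.e., t is in the affine span of {A_i, P_{λ,i}}); moreover t lies on the Euler line of A_1…A_n, since t = P_{λ/(λ+1)}, the point (λ/(λ+1))·Σ_{j=1}^n a_j. -/
open scoped BigOperators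

/-- With `t = (λ/(λ+1)) • ∑ j, a j`, the point `t` lies on each line through
`A_i` and `P_{λ,i} = λ • (∑ j, a j - a i)` (i.e. in the affine span of these two points),
and moreover `t` lies on the Euler line `{ μ • ∑ j, a j : μ ∈ ℝ }`,
since `t = P_{λ/(λ+1)}`. -/
theorem stmt_3 (d n : ℕ) (hd : 1 < d) (hn : 2 < n) (lam : ℝ) (hlam : lam ≠ -1)
    (a : Fin n → EuclideanSpace ℝ (Fin d)) (ha : ∀ j, ‖a j‖ = 1)
    (t : EuclideanSpace ℝ (Fin d)) (ht : t = (lam / (lam + 1)) • ∑ j, a j) :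
    (∀ i : Fin n, t ∈ affineSpan ℝ ({a i, lam • (∑ j, a j - a i)} :
      Set (EuclideanSpace ℝ (Fin d)))) ∧
    t ∈ {x : EuclideanSpace ℝ (Fin d) | ∃ mu : ℝ, x = mu • ∑ j, a j} := by
  have h1 : lam + 1 ≠ 0 := by
    intro h; apply hlam; linarith
  constructor
  · intro i
    have key : t = AffineMap.lineMap (a i) (lam • (∑ j, a j - a i)) (1 / (lam + 1)) := by
      rw [ht, AffineMap.lineMap_apply]
      simp only [vsub_eq_sub, vadd_eq_add, smul_sub]
      match_scalars <;> field_simp <;> ring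
    rw [key]
    exact AffineMap.lineMap_mem_affineSpan_pair _ _ _
  · exact ⟨lam / (lam + 1), ht⟩
end

section
/- Let A_1, A_2, A_3, A_4 be points on the unit circle centered at the origin in the Euclidean plane, such that every three of them are affinely independent. Then for each index i, the orthocenter H_i of the triangle formed by the three points other than A_i lies on the circle of radius 1 centered at the point H = a_1 + a_2 + a_3 + a_4; that is, dist(H_i, H) = 1 for all i. -/
/-!
A triangle inscribed in the unit circle has circumcenter `0`, so by Sylvester's theorem its
orthocenter is the sum of its vertices. Hence the orthocenter of the triangle omitting `aᵢ` is
`H - aᵢ`, at distance `‖aᵢ‖ = 1` from `H = a₁ + a₂ + a₃ + a₄`.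
-/

open Module

namespace Affine.Simplex

variable {V P : Type*} [NormedAddCommGroup V] [InnerProductSpace ℝ V] [MetricSpace P]
  [NormedAddTorsor V P] [FiniteDimensional ℝ V]

theorem circumcenter_eq_of_dist_eq_of_finrank_eq {n : ℕ} (hd : finrank ℝ V = n)
    (s : Simplex ℝ P n) {p : P} {r : ℝ} (hr : ∀ i, dist (s.points i) p = r) :
    s.circumcenter = p :=
  (s.eq_circumcenter_of_dist_eq (by
    simp [s.independent.affineSpan_eq_top_iff_card_eq_finrank_add_one.mpr (by simp [hd])]) hr).symm

end Affine.Simplex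

namespace Affine.Triangle

variable {V : Type*} [NormedAddCommGroup V] [InnerProductSpace ℝ V] [FiniteDimensional ℝ V]

theorem orthocenter_eq_sum_points_of_norm_eq (hd : finrank ℝ V = 2)
    (t : Triangle ℝ V) {r : ℝ} (hr : ∀ i, ‖t.points i‖ = r) :
    t.orthocenter = ∑ i, t.points i := by
  have hcc : t.circumcenter = 0 :=
    Simplex.circumcenter_eq_of_dist_eq_of_finrank_eq hd t (r := r) (by simpa using hr)
  simpa [hcc] using t.orthocenter_vsub_circumcenter_eq_sum_vsub

end Affine.Triangle

/-- For four points on the unit circle centered at the origin, every three of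
which are affinely independent, the orthocenter of each sub-triangle (omitting `A_i`) lies
on the circle of radius `1` centered at `H = a₁ + a₂ + a₃ + a₄`. -/
theorem stmt_5 (a : Fin 4 → EuclideanSpace ℝ (Fin 2)) (ha : ∀ i, ‖a i‖ = 1)
    (hindep : ∀ i : Fin 4, AffineIndependent ℝ (a ∘ i.succAbove)) :
    ∀ i : Fin 4,
      dist (Affine.Triangle.orthocenter
          (⟨a ∘ i.succAbove, hindep i⟩ :
            Affine.Triangle ℝ (EuclideanSpace ℝ (Fin 2))))
        (∑ j, a j) = 1 := by
  intro i
  have hortho := Affine.Triangle.orthocenter_eq_sum_points_of_norm_eq finrank_euclideanSpace_fin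
    ⟨a ∘ i.succAbove, hindep i⟩ (r := 1) (fun k => ha _)
  rw [hortho, Fin.sum_univ_succAbove a i, dist_eq_norm]
  simp [ha i]
end

section
/- Let A, B, C be an affinely independent triangle in the Euclidean plane whose circumcenter is the origin (‖A‖ = ‖B‖ = ‖C‖ = R, the circumradius). Let a = dist(B,C), b = dist(C,A), c = dist(A,B), let S be twice the area of the triangle, and set S_A = (b²+c²−a²)/2, S_B = (c²+a²−b²)/2, S_C = (a²+b²−c²)/2. Let u, v be real numbers with (3u+v)·S² ≠ 0, and let X be the point with barycentric weights f_A = u·S² + v·S_B·S_C, f_B = u·S² + v·S_C·S_A, f_C = u·S² + v·S_A·S_B, i.e., X = (f_A·A + f_B·B + f_C·C)/(f_A + f_B + f_C). Then, with G = (1/3)·(A+B+C) the centroid, X − G = (2v/(3u+v))·(G − 0); that is, X − G = (2v/(3u+v))·G. -/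
/-!
With `S_A = ⟪B - A, C - A⟫` etc., Conway's identity `S_A S_B + S_B S_C + S_C S_A = S²` is the
Lagrange identity in the plane. If `H` lies on the altitudes from `A` and `B`, the vector
`∑ S_B S_C • (H - A)` is orthogonal to `B - C` and to `C - A`, hence zero in a nondegenerate
triangle: `H` has barycentrics `(S_B S_C : S_C S_A : S_A S_B)`. With circumcentre `0` the point
`A + B + C` lies on every altitude, since `⟪B + C, B - C⟫ = ‖B‖² - ‖C‖² = 0`. So
`∑ f_A • A = (u + v) S² • (A + B + C)` and `∑ f_A = (3u + v) S²`, and the formula follows.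
-/

open RealInnerProductSpace

section InnerProductSpace

variable {V : Type*} [NormedAddCommGroup V] [InnerProductSpace ℝ V]

def conwaySymbol (A B C : V) : ℝ := ⟪B - A, C - A⟫

theorem conwaySymbol_eq_dist (A B C : V) :
    conwaySymbol A B C = (dist C A ^ 2 + dist A B ^ 2 - dist B C ^ 2) / 2 := by
  rw [dist_eq_norm, dist_eq_norm, dist_eq_norm, norm_sub_rev A B,
    show B - C = (B - A) - (C - A) by abel, norm_sub_sq_real (B - A) (C - A), conwaySymbol]
  ring

theorem sum_conwaySymbol_mul_eq (A B C : V) :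
    conwaySymbol A B C * conwaySymbol B C A + conwaySymbol B C A * conwaySymbol C A B +
      conwaySymbol C A B * conwaySymbol A B C =
      ‖B - A‖ ^ 2 * ‖C - A‖ ^ 2 - ⟪B - A, C - A⟫ ^ 2 := by
  have hB : conwaySymbol B C A = ‖B - A‖ ^ 2 - ⟪B - A, C - A⟫ := by
    rw [conwaySymbol, show C - B = (C - A) - (B - A) by abel, show A - B = -(B - A) by abel,
      inner_neg_right, inner_sub_left, real_inner_self_eq_norm_sq, real_inner_comm]
    ring
  have hC : conwaySymbol C A B = ‖C - A‖ ^ 2 - ⟪B - A, C - A⟫ := by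
    rw [conwaySymbol, show B - C = (B - A) - (C - A) by abel, show A - C = -(C - A) by abel,
      inner_neg_left, inner_sub_right, real_inner_self_eq_norm_sq, real_inner_comm (B - A)]
    ring
  rw [hB, hC, conwaySymbol]
  ring

theorem inner_conwaySymbol_weighted_sub_eq_zero {A B C H : V} (hH : ⟪H - A, B - C⟫ = 0) :
    ⟪(conwaySymbol B C A * conwaySymbol C A B) • (H - A) +
      (conwaySymbol C A B * conwaySymbol A B C) • (H - B) +
      (conwaySymbol A B C * conwaySymbol B C A) • (H - C), B - C⟫ = 0 := by
  have hB : ⟪H - B, B - C⟫ = -conwaySymbol B C A := by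
    rw [show H - B = (H - A) - (B - A) by abel, inner_sub_left, hH, conwaySymbol,
      show C - B = -(B - C) by abel, show A - B = -(B - A) by abel, inner_neg_neg,
      real_inner_comm]
    ring
  have hC : ⟪H - C, B - C⟫ = conwaySymbol C A B := by
    rw [show H - C = (H - A) + (A - C) by abel, inner_add_left, hH, conwaySymbol]
    ring
  simp only [inner_add_left, real_inner_smul_left, hH, hB, hC]
  ring

end InnerProductSpace

theorem EuclideanSpace.inner_fin_two (x y : EuclideanSpace ℝ (Fin 2)) :
    ⟪x, y⟫ = x 0 * y 0 + x 1 * y 1 := by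
  simp [EuclideanSpace.inner_eq_star_dotProduct, dotProduct, Fin.sum_univ_two, mul_comm]

theorem EuclideanSpace.sq_det_fin_two (x y : EuclideanSpace ℝ (Fin 2)) :
    (x 0 * y 1 - x 1 * y 0) ^ 2 = ‖x‖ ^ 2 * ‖y‖ ^ 2 - ⟪x, y⟫ ^ 2 := by
  rw [← real_inner_self_eq_norm_sq, ← real_inner_self_eq_norm_sq, inner_fin_two, inner_fin_two,
    inner_fin_two]
  ring

theorem EuclideanSpace.eq_zero_of_inner_eq_zero_of_det_ne_zero {w x y : EuclideanSpace ℝ (Fin 2)}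
    (hdet : x 0 * y 1 - x 1 * y 0 ≠ 0) (hx : ⟪w, x⟫ = 0) (hy : ⟪w, y⟫ = 0) : w = 0 := by
  rw [inner_fin_two] at hx hy
  have h₀ : w 0 = 0 := mul_left_cancel₀ hdet (by linear_combination y 1 * hx - x 1 * hy)
  have h₁ : w 1 = 0 := mul_left_cancel₀ hdet (by linear_combination x 0 * hy - y 0 * hx)
  ext i
  fin_cases i <;> simp [h₀, h₁]

theorem weighted_sum_conwaySymbol_eq_of_altitudes {A B C H : EuclideanSpace ℝ (Fin 2)}
    (hdet : (B 0 - A 0) * (C 1 - A 1) - (B 1 - A 1) * (C 0 - A 0) ≠ 0)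
    (hA : ⟪H - A, B - C⟫ = 0) (hB : ⟪H - B, C - A⟫ = 0) :
    (conwaySymbol B C A * conwaySymbol C A B) • A + (conwaySymbol C A B * conwaySymbol A B C) • B +
        (conwaySymbol A B C * conwaySymbol B C A) • C =
      (conwaySymbol A B C * conwaySymbol B C A + conwaySymbol B C A * conwaySymbol C A B +
        conwaySymbol C A B * conwaySymbol A B C) • H := by
  have hBC := inner_conwaySymbol_weighted_sub_eq_zero hA
  have hCA := inner_conwaySymbol_weighted_sub_eq_zero hB
  rw [← sub_eq_zero, ← neg_eq_zero]
  convert EuclideanSpace.eq_zero_of_inner_eq_zero_of_det_ne_zero _ hBC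
    (by convert hCA using 2; abel) using 1
  · module
  · simp only [PiLp.sub_apply]
    convert hdet using 1
    ring

theorem weighted_sum_sub_centroid_eq {M : Type*} [AddCommGroup M] [Module ℝ M] (A B C : M)
    (pA pB pC σ u v : ℝ) (hσ : pA + pB + pC = σ)
    (hp : pA • A + pB • B + pC • C = σ • (A + B + C)) (huv : (3 * u + v) * σ ≠ 0) :
    ((u * σ + v * pA) + (u * σ + v * pB) + (u * σ + v * pC))⁻¹ •
        ((u * σ + v * pA) • A + (u * σ + v * pB) • B + (u * σ + v * pC) • C) -
      ((1 : ℝ) / 3) • (A + B + C) =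
      (2 * v / (3 * u + v)) • (((1 : ℝ) / 3) • (A + B + C)) := by
  have hsum : (u * σ + v * pA) + (u * σ + v * pB) + (u * σ + v * pC) = (3 * u + v) * σ := by
    linear_combination v * hσ
  have hweighted : (u * σ + v * pA) • A + (u * σ + v * pB) • B + (u * σ + v * pC) • C =
      ((u + v) * σ) • (A + B + C) :=
    calc _ = (u * σ) • (A + B + C) + v • (pA • A + pB • B + pC • C) := by module
      _ = ((u + v) * σ) • (A + B + C) := by rw [hp]; module
  have h3uv : 3 * u + v ≠ 0 := left_ne_zero_of_mul huv
  have hσ0 : σ ≠ 0 := right_ne_zero_of_mul huv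
  rw [hsum, hweighted, smul_smul, smul_smul, ← sub_smul]
  congr 1
  field_simp
  ring

theorem stmt_10_general (A B C : EuclideanSpace ℝ (Fin 2))
    (R : ℝ) (hA : ‖A‖ = R) (hB : ‖B‖ = R) (hC : ‖C‖ = R)
    (a b c S SA SB SC : ℝ)
    (hab : a = dist B C) (hbc : b = dist C A) (hca : c = dist A B)
    (hS : S = |(B 0 - A 0) * (C 1 - A 1) - (B 1 - A 1) * (C 0 - A 0)|)
    (hSA : SA = (b ^ 2 + c ^ 2 - a ^ 2) / 2)
    (hSB : SB = (c ^ 2 + a ^ 2 - b ^ 2) / 2)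
    (hSC : SC = (a ^ 2 + b ^ 2 - c ^ 2) / 2)
    (u v : ℝ) (huv : (3 * u + v) * S ^ 2 ≠ 0)
    (fA fB fC : ℝ)
    (hfA : fA = u * S ^ 2 + v * SB * SC)
    (hfB : fB = u * S ^ 2 + v * SC * SA)
    (hfC : fC = u * S ^ 2 + v * SA * SB)
    (X G : EuclideanSpace ℝ (Fin 2))
    (hX : X = (fA + fB + fC)⁻¹ • (fA • A + fB • B + fC • C))
    (hG : G = ((1 : ℝ) / 3) • (A + B + C)) :
    X - G = (2 * v / (3 * u + v)) • G := by
  have hSA' : SA = conwaySymbol A B C := by rw [conwaySymbol_eq_dist, hSA, hab, hbc, hca]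
  have hSB' : SB = conwaySymbol B C A := by rw [conwaySymbol_eq_dist, hSB, hab, hbc, hca]
  have hSC' : SC = conwaySymbol C A B := by rw [conwaySymbol_eq_dist, hSC, hab, hbc, hca]
  have hconway : SA * SB + SB * SC + SC * SA = S ^ 2 := by
    rw [hSA', hSB', hSC', sum_conwaySymbol_mul_eq, ← EuclideanSpace.sq_det_fin_two, hS, sq_abs]
    simp
  have hdet : (B 0 - A 0) * (C 1 - A 1) - (B 1 - A 1) * (C 0 - A 0) ≠ 0 := by
    intro h
    simp [hS, h] at huv
  have horthocenter := weighted_sum_conwaySymbol_eq_of_altitudes (H := A + B + C) hdet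
    (by rw [show A + B + C - A = B + C by abel, real_inner_add_sub_eq_zero_iff, hB, hC])
    (by rw [show A + B + C - B = C + A by abel, real_inner_add_sub_eq_zero_iff, hC, hA])
  rw [← hSA', ← hSB', ← hSC', hconway] at horthocenter
  subst hX hG hfA hfB hfC
  simpa only [mul_assoc] using
    weighted_sum_sub_centroid_eq A B C _ _ _ _ u v (by rw [← hconway]; ring) horthocenter huv

/-- Kimberling's lemma: Let `A, B, C` be an affinely independent triangle in the
Euclidean plane whose circumcenter is the origin (`‖A‖ = ‖B‖ = ‖C‖ = R`). With side lengths
`a = dist B C`, `b = dist C A`, `c = dist A B`, `S` twice the area of the triangle (in the plane,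
`S = |(B₀-A₀)(C₁-A₁) - (B₁-A₁)(C₀-A₀)|`), Conway symbols `S_A, S_B, S_C`, real numbers `u, v`
with `(3u+v)·S² ≠ 0`, and `X` the point with barycentric weights
`(u·S² + v·S_B·S_C : u·S² + v·S_C·S_A : u·S² + v·S_A·S_B)`, we have, with `G` the centroid,
`X - G = (2v/(3u+v)) • G`. -/
theorem stmt_10 (A B C : EuclideanSpace ℝ (Fin 2))
    (hindep : AffineIndependent ℝ ![A, B, C])
    (R : ℝ) (hA : ‖A‖ = R) (hB : ‖B‖ = R) (hC : ‖C‖ = R)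
    (a b c S SA SB SC : ℝ)
    (hab : a = dist B C) (hbc : b = dist C A) (hca : c = dist A B)
    (hS : S = |(B 0 - A 0) * (C 1 - A 1) - (B 1 - A 1) * (C 0 - A 0)|)
    (hSA : SA = (b ^ 2 + c ^ 2 - a ^ 2) / 2)
    (hSB : SB = (c ^ 2 + a ^ 2 - b ^ 2) / 2)
    (hSC : SC = (a ^ 2 + b ^ 2 - c ^ 2) / 2)
    (u v : ℝ) (huv : (3 * u + v) * S ^ 2 ≠ 0)
    (fA fB fC : ℝ)
    (hfA : fA = u * S ^ 2 + v * SB * SC)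
    (hfB : fB = u * S ^ 2 + v * SC * SA)
    (hfC : fC = u * S ^ 2 + v * SA * SB)
    (X G : EuclideanSpace ℝ (Fin 2))
    (hX : X = (fA + fB + fC)⁻¹ • (fA • A + fB • B + fC • C))
    (hG : G = ((1 : ℝ) / 3) • (A + B + C)) :
    X - G = (2 * v / (3 * u + v)) • G :=
  stmt_10_general A B C R hA hB hC a b c S SA SB SC hab hbc hca hS hSA hSB hSC u v huv fA fB fC hfA
    hfB hfC X G hX hG
end
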